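/- (Fourth-order attractor polynomial.) Let Δ > 0 and let β be a real number with −1 < β < 7/9. Define f(u) = 1 − (3(β + 1)/Δ²) u² + (2(β + 1)/Δ⁴) u⁴. Then f(0) = 1, and for every real u with 0 < |u| ≤ Δ one has |f(u)| < 1. (Hence, applied with u = λ_i − λ_a for eigenvalues λ_i ≠ λ_a of P and Δ = max_{i≠a} |λ_i − λ_a|, this f satisfies the hypotheses of the Harmonic Attractor Dynamics proposition.) -/
import Mathlib


/-- Fourth-order attractor polynomial: for `Δ > 0`, `−1 < β < 7/9`, and
`f(u) = 1 − (3(β+1)/Δ²) u² + (2(β+1)/Δ⁴) u⁴`, we have `f(0) = 1` and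
`|f(u)| < 1` for every `u` with `0 < |u| ≤ Δ`. -/
theorem fourth_order_attractor_polynomial (Δ β : ℝ) (hΔ : 0 < Δ)
    (hβ₁ : -1 < β) (hβ₂ : β < 7 / 9) (f : ℝ → ℝ)
    (hf : ∀ u, f u = 1 - (3 * (β + 1) / Δ ^ 2) * u ^ 2
      + (2 * (β + 1) / Δ ^ 4) * u ^ 4) :
    f 0 = 1 ∧ ∀ u : ℝ, 0 < |u| → |u| ≤ Δ → |f u| < 1 := by
  constructor
  · rw [hf]; ring
  · intro u hu1 hu2
    have hΔ4 : (0:ℝ) < Δ ^ 4 := by positivity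
    have hu2sq : u ^ 2 ≤ Δ ^ 2 := by
      have := sq_abs u
      nlinarith [abs_nonneg u]
    have hupos : 0 < u ^ 2 := by
      have := sq_abs u
      nlinarith
    have key : f u = 1 - (β + 1) * (3 * Δ ^ 2 - 2 * u ^ 2) * u ^ 2 / Δ ^ 4 := by
      rw [hf]; field_simp; ring
    rw [key, abs_lt]
    have hA : 0 < (3 * Δ ^ 2 - 2 * u ^ 2) * u ^ 2 := by nlinarith
    have hβ0 : 0 < β + 1 := by linarith
    constructor
    · have h2 : (β + 1) * (3 * Δ ^ 2 - 2 * u ^ 2) * u ^ 2 < 2 * Δ ^ 4 := by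
        nlinarith [sq_nonneg (4 * u ^ 2 - 3 * Δ ^ 2), mul_pos hβ0 hA]
      have := (div_lt_iff₀ hΔ4).mpr (by linarith : (β + 1) * (3 * Δ ^ 2 - 2 * u ^ 2) * u ^ 2 < 2 * Δ ^ 4)
      linarith
    · have h1 : 0 < (β + 1) * (3 * Δ ^ 2 - 2 * u ^ 2) * u ^ 2 / Δ ^ 4 := by
        rw [mul_assoc]; positivity
      linarith
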